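/- Let X be a right-angled building of type (W,S), let σ be a panel of type i ∈ S, and let c ≠ c' be two chambers of σ. Let g ∈ Aut(X)⁺ be such that δ(c', g(c)) = j for some j ∈ S with m(i,j) = ∞. Let h ∈ Aut(X)⁺ be an element of the product ∏_{d ∈ σ\{c,c'}} V_i(d), i.e. h fixes X_i(c) ∪ X_i(c') pointwise and, for each d ∈ σ \ {c,c'}, the map agreeing with h on X_i(d) and with the identity elsewhere belongs to V_i(d). Then there exists x ∈ Aut(X)⁺ such that h = x g x⁻¹ g⁻¹. -/

import Mathlib

noncomputable section

open scoped Classical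

namespace RAB

variable {B W : Type*} [Group W] {M : CoxeterMatrix B}

/-- The Coxeter system `cs` is right-angled: the order `m(s,t)` of `s*t` is `2` or `∞`
(infinite order being encoded by `orderOf _ = 0`) for all distinct simple reflections. -/
def IsRightAngled (cs : CoxeterSystem M W) : Prop :=
  ∀ i j : B, i ≠ j →
    orderOf (cs.simple i * cs.simple j) = 2 ∨ orderOf (cs.simple i * cs.simple j) = 0

/-- The graph on the simple system joining `i, j` whenever `m(s_i, s_j) ≠ 2`. -/
def coxeterGraph (cs : CoxeterSystem M W) : SimpleGraph B where
  Adj i j := i ≠ j ∧ orderOf (cs.simple i * cs.simple j) ≠ 2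
  symm := ⟨by
    rintro i j ⟨hij, h2⟩
    refine ⟨hij.symm, fun h => h2 ?_⟩
    have hsc : SemiconjBy (cs.simple i) (cs.simple j * cs.simple i)
        (cs.simple i * cs.simple j) := by
      unfold SemiconjBy
      group
    rw [← hsc.orderOf_eq (cs.simple i)]
    exact h⟩
  loopless := ⟨fun i h => h.1 rfl⟩

/-- `(W, S)` is irreducible: the graph on `S` joining `s, t` whenever `m(s,t) ≠ 2`
is connected. -/
def IsIrreducible (cs : CoxeterSystem M W) : Prop := (coxeterGraph cs).Connected

/-- `J⊥ = {i ∈ S \ J : m(i,j) = 2 for all j ∈ J}`. -/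
def perp (cs : CoxeterSystem M W) (J : Set B) : Set B :=
  {i : B | i ∉ J ∧ ∀ j ∈ J, orderOf (cs.simple i * cs.simple j) = 2}

/-- The Cayley graph of `W` with respect to the simple system, joining `u ≠ v`
whenever `u⁻¹ * v` is a simple reflection. -/
def cayleyGraph (cs : CoxeterSystem M W) : SimpleGraph W where
  Adj u v := u ≠ v ∧ u⁻¹ * v ∈ Set.range cs.simple
  symm := ⟨by
    rintro u v ⟨huv, i, hi⟩
    refine ⟨huv.symm, i, ?_⟩
    calc cs.simple i = (cs.simple i)⁻¹ := (cs.inv_simple i).symm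
      _ = (u⁻¹ * v)⁻¹ := by rw [hi]
      _ = v⁻¹ * u := by group⟩
  loopless := ⟨fun u h => h.1 rfl⟩

/-- A building of type `(W, S)`, where the Coxeter system with simple system `S`
indexed by `B` is `cs`: a nonempty set `C` of chambers together with a Weyl
distance `δ : C × C → W` satisfying the three building axioms. -/
structure Building (cs : CoxeterSystem M W) (C : Type*) where
  nonempty : Nonempty C
  δ : C → C → W
  delta_eq_one_iff : ∀ x y : C, δ x y = 1 ↔ x = y
  delta_mem_pair : ∀ (x y z : C) (i : B), δ y z = cs.simple i →
    δ x z = δ x y ∨ δ x z = δ x y * cs.simple i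
  delta_eq_of_length : ∀ (x y z : C) (i : B), δ y z = cs.simple i →
    cs.length (δ x y * cs.simple i) = cs.length (δ x y) + 1 →
    δ x z = δ x y * cs.simple i
  exists_delta : ∀ (x y : C) (i : B), ∃ z : C,
    δ y z = cs.simple i ∧ δ x z = δ x y * cs.simple i

namespace Building

variable {C : Type*} {cs : CoxeterSystem M W} (X : Building cs C)

/-- The gallery distance between two chambers. -/
def dist (x y : C) : ℕ := cs.length (X.δ x y)

/-- The residue of type `J` containing the chamber `c`. -/
def Res (J : Set B) (c : C) : Set C :=
  {x : C | X.δ c x ∈ Subgroup.closure (cs.simple '' J)}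

/-- `R` is a residue of type `J`. -/
def IsResidueOfType (J : Set B) (R : Set C) : Prop := ∃ c : C, R = X.Res J c

/-- `R` is a residue. -/
def IsResidue (R : Set C) : Prop := ∃ J : Set B, X.IsResidueOfType J R

/-- `R` is a panel, i.e. a residue of type `{i}` for some `i`. -/
def IsPanel (R : Set C) : Prop := ∃ i : B, X.IsResidueOfType {i} R

/-- `p` is *the* projection of the chamber `c` on the set `R`: the unique chamber
of `R` at minimal gallery distance from `c`. -/
def IsProj (R : Set C) (c p : C) : Prop :=
  p ∈ R ∧ ∀ x ∈ R, x ≠ p → X.dist c p < X.dist c x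

/-- The projection of the chamber `c` on `R` (defaulting to `c` in degenerate
situations where no projection exists). -/
def proj (R : Set C) (c : C) : C :=
  if h : ∃ p : C, X.IsProj R c p then h.choose else c

/-- The projection `proj_R(R') = {proj_R(x) : x ∈ R'}`. -/
def projSet (R R' : Set C) : Set C := X.proj R '' R'

/-- Two sets of chambers (typically residues) are parallel if they project onto
one another. -/
def Parallel (R R' : Set C) : Prop :=
  X.projSet R R' = R ∧ X.projSet R' R = R'

/-- The gallery distance from a chamber to a residue. -/
def distCR (c : C) (R : Set C) : ℕ := X.dist c (X.proj R c)

/-- The gallery distance between two residues. -/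
def distRR (R R' : Set C) : ℕ := sInf ((fun x => X.distCR x R') '' R)

/-- The `J`-wing of the chamber `c`: the set of chambers whose projection to the
`J`-residue of `c` is `c` itself. -/
def wing (J : Set B) (c : C) : Set C := {x : C | X.proj (X.Res J c) x = c}

/-- An apartment: a subset of the chambers in bijection with `W`, the bijection
transporting the Weyl distance to `(u, v) ↦ u⁻¹ * v`. -/
def IsApartment (A : Set C) : Prop :=
  ∃ f : W → C, Function.Injective f ∧ Set.range f = A ∧
    ∀ u v : W, X.δ (f u) (f v) = u⁻¹ * v

/-- The group of type-preserving automorphisms of the building: all permutations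
of the chambers preserving the Weyl distance. -/
def autPlus : Subgroup (Equiv.Perm C) where
  carrier := {g : Equiv.Perm C | ∀ x y : C, X.δ (g x) (g y) = X.δ x y}
  one_mem' := fun _ _ => rfl
  mul_mem' := by
    intro a b ha hb x y
    simp only [Equiv.Perm.mul_apply]
    rw [ha, hb]
  inv_mem' := by
    intro a ha x y
    have h := ha (a⁻¹ x) (a⁻¹ y)
    simpa using h.symm

/-- The subgroup `U_i(c)` of type-preserving automorphisms fixing the `i`-wing
of `c` pointwise. -/
def U (i : B) (c : C) : Subgroup (Equiv.Perm C) :=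
  X.autPlus ⊓ fixingSubgroup (Equiv.Perm C) (X.wing {i} c)

/-- The subgroup `V_i(c)` of type-preserving automorphisms fixing the complement of
the `i`-wing of `c` pointwise. -/
def V (i : B) (c : C) : Subgroup (Equiv.Perm C) :=
  X.autPlus ⊓ fixingSubgroup (Equiv.Perm C) (X.wing {i} c)ᶜ

/-- The building is thick: every panel has at least three chambers. -/
def Thick : Prop := ∀ R : Set C, X.IsPanel R →
  ∃ x ∈ R, ∃ y ∈ R, ∃ z ∈ R, x ≠ y ∧ x ≠ z ∧ y ≠ z

/-- The building is semi-regular: for each `i`, all panels of type `i` have the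
same cardinality. -/
def SemiRegular : Prop := ∀ (i : B) (R R' : Set C),
  X.IsResidueOfType {i} R → X.IsResidueOfType {i} R' → Cardinal.mk R = Cardinal.mk R'

/-- The building is locally finite: every panel is finite. -/
def LocallyFinite : Prop := ∀ R : Set C, X.IsPanel R → R.Finite

/-- The chamber graph of the building: two distinct chambers are joined whenever
their Weyl distance is a simple reflection. -/
def chamberGraph : SimpleGraph C where
  Adj x y := x ≠ y ∧ X.δ x y ∈ Set.range cs.simple ∧ X.δ y x ∈ Set.range cs.simple
  symm := ⟨by rintro x y ⟨h1, h2, h3⟩; exact ⟨h1.symm, h3, h2⟩⟩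
  loopless := ⟨fun x h => h.1 rfl⟩

end Building

end RAB

/-!
Let `A` be the complement of `X_i(c) ∪ X_i(c')`, so that `h` is supported in `A`. Because
`m(i,j) = ∞`, no element of `W` has both `i` and `j` as right descents; hence a chamber outside
`X_i(c)` lies in `X_j(c)`, so `g` maps `A` into `Y = X_j(g c)`. Moreover `Y ⊆ X_i(c')` misses `A`,
and `g Y ⊆ Y` since `δ(g c, g² c) = s_i s_j`. So the translates `gⁿ A` are pairwise disjoint,
the infinite product `x = ∏_{n ≥ 0} gⁿ h g⁻ⁿ` of automorphisms with disjoint supports is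
an automorphism, and `x = h (g x g⁻¹)`, i.e. `h = x g x⁻¹ g⁻¹`.

The fact about descents comes from the exchange condition: a reduced word for such an element
would have to begin with arbitrarily long alternating words in `i` and `j`. The exchange condition
itself is obtained from the sign cocycle `W → (W → ℤˣ)` that records the parity of the number
of occurrences of a reflection in the left inversion sequence of any word.
-/

namespace Equiv.Perm

variable {C α : Type*}

theorem apply_inv_self (f : Perm C) (x : C) : f (f⁻¹ x) = x := f.apply_symm_apply x

theorem inv_apply_self (f : Perm C) (x : C) : f⁻¹ (f x) = x := f.symm_apply_apply x

def preservingSubgroup (δ : C → C → α) : Subgroup (Perm C) where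
  carrier := {g | ∀ x y, δ (g x) (g y) = δ x y}
  one_mem' _ _ := rfl
  mul_mem' ha hb x y := by rw [mul_apply, mul_apply, ha, hb]
  inv_mem' {a} ha x y := by simpa using (ha (a⁻¹ x) (a⁻¹ y)).symm

def IsWandering (g : Perm C) (A : Set C) : Prop := ∀ n, ∀ y ∈ A, (g ^ (n + 1)) y ∉ A

def AvoidsTranslatesExcept (g : Perm C) (A : Set C) (n : ℕ) (y : C) : Prop :=
  ∀ m, (g ^ m)⁻¹ y ∈ A → m = n

variable {g h : Perm C} {A : Set C}

theorem apply_mem_of_forall_not_mem_apply_eq_self (hsupp : ∀ y ∉ A, h y = y) {y : C}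
    (hy : y ∈ A) : h y ∈ A := by
  by_contra hhy
  rw [← h.injective (hsupp _ hhy)] at hy
  exact hhy hy

theorem inv_apply_eq_self_of_not_mem (hsupp : ∀ y ∉ A, h y = y) : ∀ y ∉ A, h⁻¹ y = y :=
  fun y hy => by rw [inv_eq_iff_eq, hsupp y hy]

theorem IsWandering.avoidsTranslatesExcept (hA : IsWandering g A) {n : ℕ} {y : C}
    (hy : (g ^ n)⁻¹ y ∈ A) : AvoidsTranslatesExcept g A n y := by
  have hlt : ∀ k l, k < l → (g ^ k)⁻¹ y ∈ A → (g ^ l)⁻¹ y ∉ A := by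
    intro k l hkl hk hl
    obtain ⟨d, rfl⟩ := Nat.exists_eq_add_of_lt hkl
    apply hA d _ hl
    convert hk using 1
    rw [← mul_apply]
    group
  intro m hm
  rcases lt_trichotomy m n with hmn | rfl | hnm
  · exact absurd hy (hlt m n hmn hm)
  · rfl
  · exact absurd hm (hlt n m hnm hy)

theorem IsWandering.exists_avoidsTranslatesExcept (hA : IsWandering g A) (y : C) :
    ∃ n, AvoidsTranslatesExcept g A n y := by
  by_cases hy : ∃ n, (g ^ n)⁻¹ y ∈ A
  · obtain ⟨n, hn⟩ := hy
    exact ⟨n, hA.avoidsTranslatesExcept hn⟩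
  · push Not at hy
    exact ⟨0, fun m hm => absurd hm (hy m)⟩

theorem AvoidsTranslatesExcept.conj_apply_eq_self (hsupp : ∀ y ∉ A, h y = y) {n m : ℕ} {y : C}
    (hy : AvoidsTranslatesExcept g A n y) (hmn : m ≠ n) : (g ^ m * h * (g ^ m)⁻¹) y = y := by
  rw [mul_apply, mul_apply, hsupp _ (fun hm => hmn (hy m hm)), apply_inv_self]

theorem AvoidsTranslatesExcept.conj_apply (hA : IsWandering g A) (hsupp : ∀ y ∉ A, h y = y)
    {n : ℕ} {y : C} (hy : AvoidsTranslatesExcept g A n y) :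
    AvoidsTranslatesExcept g A n ((g ^ n * h * (g ^ n)⁻¹) y) := by
  by_cases hyA : (g ^ n)⁻¹ y ∈ A
  · apply hA.avoidsTranslatesExcept
    rw [mul_apply, mul_apply, inv_apply_self]
    exact apply_mem_of_forall_not_mem_apply_eq_self hsupp hyA
  · rwa [mul_apply, mul_apply, hsupp _ hyA, apply_inv_self]

theorem AvoidsTranslatesExcept.succ {n : ℕ} {y : C} (hyA : y ∉ A)
    (hy : AvoidsTranslatesExcept g A n (g⁻¹ y)) : AvoidsTranslatesExcept g A (n + 1) y := by
  rintro (_ | m) hm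
  · exact absurd (by simpa using hm) hyA
  · rw [pow_succ', mul_inv_rev, mul_apply] at hm
    rw [hy m hm]

/-- The infinite product `∏_{n ≥ 0} gⁿ h g⁻ⁿ` for `h` supported in a wandering set `A` of `g`:
it acts as `gⁿ h g⁻ⁿ` on `gⁿ A` and as the identity elsewhere. -/
def translateProd (g h : Perm C) (A : Set C) (y : C) : C :=
  if hy : ∃ n, (g ^ n)⁻¹ y ∈ A then (g ^ Nat.find hy * h * (g ^ Nat.find hy)⁻¹) y else y

theorem translateProd_apply (hsupp : ∀ y ∉ A, h y = y) {n : ℕ} {y : C}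
    (hy : AvoidsTranslatesExcept g A n y) :
    translateProd g h A y = (g ^ n * h * (g ^ n)⁻¹) y := by
  unfold translateProd
  split_ifs with hex
  · rw [hy _ (Nat.find_spec hex)]
  · push Not at hex
    rw [mul_apply, mul_apply, hsupp _ (hex n), apply_inv_self]

theorem translateProd_inv_translateProd (hA : IsWandering g A) (hsupp : ∀ y ∉ A, h y = y)
    (y : C) : translateProd g h⁻¹ A (translateProd g h A y) = y := by
  obtain ⟨n, hn⟩ := hA.exists_avoidsTranslatesExcept y
  rw [translateProd_apply hsupp hn,
    translateProd_apply (inv_apply_eq_self_of_not_mem hsupp) (hn.conj_apply hA hsupp)]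
  simp [mul_apply]

theorem translateProd_eq_apply_apply_translateProd (hA : IsWandering g A)
    (hsupp : ∀ y ∉ A, h y = y) (y : C) :
    translateProd g h A y = h (g (translateProd g h A (g⁻¹ y))) := by
  obtain ⟨n, hn⟩ := hA.exists_avoidsTranslatesExcept (g⁻¹ y)
  have hshift :
      g ((g ^ n * h * (g ^ n)⁻¹) (g⁻¹ y)) = (g ^ (n + 1) * h * (g ^ (n + 1))⁻¹) y := by
    simp only [pow_succ', mul_inv_rev, mul_apply]
  rw [translateProd_apply hsupp hn, hshift]
  by_cases hyA : y ∈ A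
  · have h0 : AvoidsTranslatesExcept g A 0 y := hA.avoidsTranslatesExcept (by simpa)
    rw [translateProd_apply hsupp h0, h0.conj_apply_eq_self hsupp n.succ_ne_zero]
    simp
  · have hsucc := hn.succ hyA
    rw [translateProd_apply hsupp hsucc]
    simpa using ((hsucc.conj_apply hA hsupp).conj_apply_eq_self hsupp n.succ_ne_zero.symm).symm

theorem translateProd_mem_preservingSubgroup {δ : C → C → α} (hA : IsWandering g A)
    (hsupp : ∀ y ∉ A, h y = y) (hg : g ∈ preservingSubgroup δ)
    (hh : h ∈ preservingSubgroup δ) (u v : C) :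
    δ (translateProd g h A u) (translateProd g h A v) = δ u v := by
  have hconj : ∀ n, g ^ n * h * (g ^ n)⁻¹ ∈ preservingSubgroup δ := fun n =>
    mul_mem (mul_mem (pow_mem hg n) hh) (inv_mem (pow_mem hg n))
  obtain ⟨n, hn⟩ := hA.exists_avoidsTranslatesExcept u
  obtain ⟨m, hm⟩ := hA.exists_avoidsTranslatesExcept v
  rw [translateProd_apply hsupp hn, translateProd_apply hsupp hm]
  obtain rfl | hnm := eq_or_ne n m
  · exact hconj n u v
  set p := g ^ n * h * (g ^ n)⁻¹
  set q := g ^ m * h * (g ^ m)⁻¹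
  calc δ (p u) (q v) = δ (q (p u)) (q v) := by
        rw [(hn.conj_apply hA hsupp).conj_apply_eq_self hsupp hnm.symm]
    _ = δ (p u) (p v) := by rw [hconj m, hm.conj_apply_eq_self hsupp hnm]
    _ = δ u v := hconj n u v

/-- Tits' commutator trick. -/
theorem exists_mem_preservingSubgroup_commutator_eq {δ : C → C → α}
    (hg : g ∈ preservingSubgroup δ) (hh : h ∈ preservingSubgroup δ)
    (hsupp : ∀ y ∉ A, h y = y) (hA : IsWandering g A) :
    ∃ x ∈ preservingSubgroup δ, h = x * g * x⁻¹ * g⁻¹ := by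
  let x : Perm C :=
    { toFun := translateProd g h A
      invFun := translateProd g h⁻¹ A
      left_inv := translateProd_inv_translateProd hA hsupp
      right_inv y := by
        simpa using translateProd_inv_translateProd hA (inv_apply_eq_self_of_not_mem hsupp) y }
  have hx : x = h * (g * x * g⁻¹) :=
    ext fun y => translateProd_eq_apply_apply_translateProd hA hsupp y
  refine ⟨x, translateProd_mem_preservingSubgroup hA hsupp hg hh, ?_⟩
  nth_rw 1 [hx]
  group

end Equiv.Perm

namespace SemidirectProduct

variable {N G : Type*} [CommGroup N] [Group G] {φ : G →* MulAut N}

theorem left_pow (x : N ⋊[φ] G) (n : ℕ) :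
    (x ^ n).left = ∏ k ∈ Finset.range n, φ (x.right ^ k) x.left := by
  induction n with
  | zero => rfl
  | succ n ih =>
    rw [pow_succ, mul_left, ih, Finset.prod_range_succ, ← rightHom_eq_right, map_pow]

end SemidirectProduct

namespace CoxeterSystem

open List

variable {B W : Type*} [Group W] {M : CoxeterMatrix B} (cs : CoxeterSystem M W)

theorem simple_ne_one (k : B) : cs.simple k ≠ 1 := fun h => by
  simpa [h] using cs.length_simple k

theorem orderOf_simple_mul_simple_comm (i j : B) :
    orderOf (cs.simple j * cs.simple i) = orderOf (cs.simple i * cs.simple j) := by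
  rw [← orderOf_inv, mul_inv_rev, inv_simple, inv_simple]

theorem length_simple_mul_simple {k l : B} (hkl : cs.simple k ≠ cs.simple l) :
    cs.length (cs.simple k * cs.simple l) = 2 := by
  have hne : cs.simple k * cs.simple l ≠ 1 := fun h =>
    hkl (by rw [mul_eq_one_iff_eq_inv.mp h, inv_simple])
  rcases cs.length_simple_mul (cs.simple l) k with h | h
  · rw [h, length_simple]
  · rw [length_simple] at h
    exact absurd (cs.length_eq_zero_iff.mp (by omega)) hne

theorem mem_closure_simple_singleton_iff {k : B} {w : W} :
    w ∈ Subgroup.closure (cs.simple '' {k}) ↔ w = 1 ∨ w = cs.simple k := by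
  rw [Set.image_singleton, Subgroup.mem_closure_singleton]
  constructor
  · rintro ⟨n, rfl⟩
    obtain ⟨q, rfl | rfl⟩ := Int.even_or_odd' n <;> simp [zpow_add, zpow_mul]
  · rintro (rfl | rfl)
    exacts [⟨0, zpow_zero _⟩, ⟨1, zpow_one _⟩]

def signConjAction : W →* MulAut (W → ℤˣ) :=
  mulAutArrow.comp (ConjAct.toConjAct : W ≃* ConjAct W).toMonoidHom

theorem signConjAction_apply (u : W) (f : W → ℤˣ) (t : W) :
    signConjAction u f t = f (u⁻¹ * t * u) := by
  change f ((ConjAct.toConjAct u)⁻¹ • t) = _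
  rw [← map_inv, ConjAct.toConjAct_smul, inv_inv]

theorem signConjAction_mulSingle (u a : W) (ε : ℤˣ) :
    signConjAction u (Pi.mulSingle a ε) = Pi.mulSingle (u * a * u⁻¹) ε := by
  funext t
  rw [signConjAction_apply]
  simp only [Pi.mulSingle_apply]
  congr 1
  apply propext
  constructor <;> rintro rfl <;> group

def signGen (k : B) : (W → ℤˣ) ⋊[signConjAction] W :=
  ⟨Pi.mulSingle (cs.simple k) (-1), cs.simple k⟩

theorem simple_mul_simple_pow_conj (i j : B) (k r : ℕ) :
    (cs.simple i * cs.simple j) ^ k * ((cs.simple i * cs.simple j) ^ r * cs.simple i) *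
      ((cs.simple i * cs.simple j) ^ k)⁻¹ =
        (cs.simple i * cs.simple j) ^ (2 * k + r) * cs.simple i := by
  set c := cs.simple i * cs.simple j
  have hconj : SemiconjBy (cs.simple i) c⁻¹ c := by
    simp only [SemiconjBy, c, mul_inv_rev, inv_simple]
    group
  calc c ^ k * (c ^ r * cs.simple i) * (c ^ k)⁻¹
      = c ^ k * c ^ r * (cs.simple i * c⁻¹ ^ k) := by group
    _ = c ^ k * c ^ r * (c ^ k * cs.simple i) := by rw [(hconj.pow_right k).eq]
    _ = c ^ (2 * k + r) * cs.simple i := by group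

theorem isLiftable_signGen : M.IsLiftable cs.signGen := by
  intro i j
  set f : ℕ → W → ℤˣ :=
    fun r => Pi.mulSingle ((cs.simple i * cs.simple j) ^ r * cs.simple i) (-1)
  have hleft : (cs.signGen i * cs.signGen j).left = f 0 * f 1 := by
    simp only [signGen, SemidirectProduct.mul_left, signConjAction_mulSingle, inv_simple, f]
    congr 2 <;> group
  have hterm : ∀ k, signConjAction ((cs.simple i * cs.simple j) ^ k) (f 0 * f 1) =
      f (2 * k) * f (2 * k + 1) := by
    intro k
    simp only [map_mul, f, signConjAction_mulSingle, cs.simple_mul_simple_pow_conj, add_zero]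
  have hpair : ∀ n, ∏ k ∈ Finset.range n, f (2 * k) * f (2 * k + 1) =
      ∏ r ∈ Finset.range (2 * n), f r := by
    intro n
    induction n with
    | zero => rfl
    | succ n ih => rw [Finset.prod_range_succ, ih, mul_add_one, Finset.prod_range_succ,
        Finset.prod_range_succ, mul_assoc]
  have hperiod : ∀ r, f (M i j + r) = f r := by
    intro r
    simp only [f, pow_add, cs.simple_mul_simple_pow, one_mul]
  have hsq : ∀ x : W → ℤˣ, x * x = 1 := fun x => funext fun t => Int.units_mul_self (x t)
  ext1
  · rw [SemidirectProduct.left_pow, hleft, SemidirectProduct.one_left]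
    simp only [SemidirectProduct.mul_right, signGen, hterm]
    rw [hpair, two_mul, Finset.prod_range_add]
    simp only [hperiod, hsq]
  · rw [← SemidirectProduct.rightHom_eq_right, map_pow, map_mul]
    exact cs.simple_mul_simple_pow i j

def signLift : W →* (W → ℤˣ) ⋊[signConjAction] W :=
  cs.lift ⟨cs.signGen, cs.isLiftable_signGen⟩

theorem signLift_simple (k : B) : cs.signLift (cs.simple k) = cs.signGen k :=
  cs.lift_apply_simple _ k

def inversionSign (w t : W) : ℤˣ := (cs.signLift w).left t

theorem count_map_conj (u t : W) (l : List W) :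
    (l.map (MulAut.conj u)).count t = l.count (u⁻¹ * t * u) := by
  rw [← List.count_map_of_injective l _ (MulAut.conj u).injective]
  congr 1
  simp [mul_assoc]

theorem inversionSign_wordProd (ω : List B) (t : W) :
    cs.inversionSign (cs.wordProd ω) t = (-1) ^ (cs.leftInvSeq ω).count t := by
  induction ω generalizing t with
  | nil => simp [inversionSign]
  | cons k ω ih =>
    simp only [inversionSign] at ih ⊢
    rw [wordProd_cons, map_mul, SemidirectProduct.mul_left, Pi.mul_apply, signConjAction_apply, ih,
      leftInvSeq, count_cons, count_map_conj, pow_add, mul_comm, signLift_simple]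
    congr 1
    by_cases ht : t = cs.simple k
    · simp [signGen, ht]
    · simp [signGen, ht, Ne.symm ht]

theorem simple_mem_leftInvSeq_of_isLeftDescent {w : W} {k : B} (hk : cs.IsLeftDescent w k)
    {ω : List B} (hω : cs.wordProd ω = w) : cs.simple k ∈ cs.leftInvSeq ω := by
  obtain ⟨χ, hχ, hχw⟩ := cs.exists_isReduced (cs.simple k * w)
  have hw : cs.wordProd (k :: χ) = w := by
    rw [wordProd_cons, ← hχw, simple_mul_simple_cancel_left]
  have hkχ : cs.IsReduced (k :: χ) := by
    rw [IsReduced, hw, length_cons, ← hχ.eq, ← hχw, cs.isLeftDescent_iff.mp hk]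
  have hcount : (cs.leftInvSeq (k :: χ)).count (cs.simple k) = 1 :=
    List.count_eq_one_of_mem hkχ.nodup_leftInvSeq (mem_cons_self ..)
  have hsign := cs.inversionSign_wordProd (k :: χ) (cs.simple k)
  rw [hcount, hw, ← hω, cs.inversionSign_wordProd] at hsign
  by_contra hnot
  rw [List.count_eq_zero_of_not_mem hnot] at hsign
  exact absurd hsign (by decide)

theorem leftInvSeq_append (ω ω' : List B) :
    cs.leftInvSeq (ω ++ ω') =
      cs.leftInvSeq ω ++ (cs.leftInvSeq ω').map (MulAut.conj (cs.wordProd ω)) := by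
  induction ω with
  | nil => simp
  | cons k ω ih => simp [leftInvSeq, ih, wordProd_cons, Function.comp_def]

theorem exists_mul_wordProd_eq_wordProd {t : W} {χ : List B} (ht : t ∈ cs.leftInvSeq χ) :
    ∃ χ' : List B, χ'.length + 1 = χ.length ∧ t * cs.wordProd χ = cs.wordProd χ' := by
  obtain ⟨r, hr, rfl⟩ := List.mem_iff_getElem.mp ht
  rw [length_leftInvSeq] at hr
  refine ⟨χ.eraseIdx r, List.length_eraseIdx_add_one hr, ?_⟩
  rw [← cs.getD_leftInvSeq_mul_wordProd, List.getD_eq_getElem]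

def alternatingWordFrom (x y : B) : ℕ → List B
  | 0 => []
  | m + 1 => x :: alternatingWordFrom y x m

theorem length_alternatingWordFrom (x y : B) (m : ℕ) :
    (alternatingWordFrom x y m).length = m := by
  induction m generalizing x y with
  | zero => rfl
  | succ m ih => simp [alternatingWordFrom, ih]

theorem exists_eq_of_mem_leftInvSeq_alternatingWordFrom {x y : B} {m : ℕ} {t : W}
    (ht : t ∈ cs.leftInvSeq (alternatingWordFrom x y m)) :
    ∃ r : ℕ, t = (cs.simple x * cs.simple y) ^ r * cs.simple x := by
  induction m generalizing x y t with
  | zero => simp [alternatingWordFrom] at ht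
  | succ m ih =>
    simp only [alternatingWordFrom, leftInvSeq, mem_cons, mem_map] at ht
    obtain rfl | ⟨t', ht', rfl⟩ := ht
    · exact ⟨0, by simp⟩
    · obtain ⟨r, rfl⟩ := ih ht'
      refine ⟨r + 1, ?_⟩
      rw [MulAut.conj_apply, inv_simple, ← mul_assoc, ← mul_pow_mul, pow_succ,
        mul_assoc _ (cs.simple x) (cs.simple y)]

theorem pow_mul_simple_ne_simple {x y : B} (hxy : orderOf (cs.simple x * cs.simple y) = 0)
    (r : ℕ) : (cs.simple x * cs.simple y) ^ r * cs.simple x ≠ cs.simple y := by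
  intro h
  apply orderOf_eq_zero_iff'.mp hxy (r + 1) r.succ_pos
  rw [pow_succ, ← mul_assoc, h, simple_mul_simple_self]

theorem exists_isReduced_alternatingWordFrom_succ_append {x y : B}
    (hxy : orderOf (cs.simple x * cs.simple y) = 0) {w : W} (hy : cs.IsLeftDescent w y) {m : ℕ}
    {χ : List B} (hred : cs.IsReduced (alternatingWordFrom x y m ++ χ))
    (hw : cs.wordProd (alternatingWordFrom x y m ++ χ) = w) :
    ∃ χ', cs.IsReduced (alternatingWordFrom y x (m + 1) ++ χ') ∧
      cs.wordProd (alternatingWordFrom y x (m + 1) ++ χ') = w := by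
  have hmem := cs.simple_mem_leftInvSeq_of_isLeftDescent hy hw
  rw [leftInvSeq_append, mem_append, mem_map] at hmem
  obtain hpre | ⟨t, ht, hconj⟩ := hmem
  · obtain ⟨r, hr⟩ := cs.exists_eq_of_mem_leftInvSeq_alternatingWordFrom hpre
    exact absurd hr.symm (cs.pow_mul_simple_ne_simple hxy r)
  obtain ⟨χ', hlen, hχ'⟩ := cs.exists_mul_wordProd_eq_wordProd ht
  have hyw : cs.simple y * w = cs.wordProd (alternatingWordFrom x y m ++ χ') := by
    rw [← hw, ← hconj, wordProd_append, wordProd_append, ← hχ', MulAut.conj_apply]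
    group
  have hw' : cs.wordProd (alternatingWordFrom y x (m + 1) ++ χ') = w := by
    rw [alternatingWordFrom, cons_append, wordProd_cons, ← hyw, simple_mul_simple_cancel_left]
  refine ⟨χ', ?_, hw'⟩
  rw [IsReduced, hw', ← hw, hred.eq]
  simp only [length_append, length_alternatingWordFrom]
  omega

theorem exists_isReduced_alternatingWordFrom_append {x y : B}
    (hxy : orderOf (cs.simple x * cs.simple y) = 0) {w : W} (hx : cs.IsLeftDescent w x)
    (hy : cs.IsLeftDescent w y) (m : ℕ) :
    ∃ χ, cs.IsReduced (alternatingWordFrom x y m ++ χ) ∧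
      cs.wordProd (alternatingWordFrom x y m ++ χ) = w := by
  induction m generalizing x y with
  | zero =>
    obtain ⟨χ, hχ, rfl⟩ := cs.exists_isReduced w
    exact ⟨χ, hχ, rfl⟩
  | succ m ih =>
    rw [← orderOf_simple_mul_simple_comm] at hxy
    obtain ⟨χ, hred, hw⟩ := ih hxy hy hx
    exact cs.exists_isReduced_alternatingWordFrom_succ_append hxy hx hred hw

theorem not_isLeftDescent_of_isLeftDescent {i j : B}
    (hij : orderOf (cs.simple i * cs.simple j) = 0) {w : W} (hi : cs.IsLeftDescent w i) :
    ¬cs.IsLeftDescent w j := by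
  intro hj
  obtain ⟨χ, hred, hw⟩ :=
    cs.exists_isReduced_alternatingWordFrom_append hij hi hj (cs.length w + 1)
  have := hred.eq
  rw [hw, length_append, length_alternatingWordFrom] at this
  omega

theorem not_isRightDescent_of_isRightDescent {i j : B}
    (hij : orderOf (cs.simple i * cs.simple j) = 0) {w : W} (hi : cs.IsRightDescent w i) :
    ¬cs.IsRightDescent w j := by
  rw [← isLeftDescent_inv_iff] at hi ⊢
  exact cs.not_isLeftDescent_of_isLeftDescent hij hi

end CoxeterSystem

namespace RAB.Building

variable {B W C : Type*} [Group W] {M : CoxeterMatrix B} {cs : CoxeterSystem M W}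
  (X : Building cs C)

theorem delta_self (x : C) : X.δ x x = 1 := (X.delta_eq_one_iff x x).mpr rfl

theorem delta_comm_of_eq_simple {x y : C} {k : B} (hxy : X.δ x y = cs.simple k) :
    X.δ y x = cs.simple k := by
  rcases X.delta_mem_pair y x y k hxy with h | h <;> rw [delta_self] at h
  · rw [(X.delta_eq_one_iff y x).mp h.symm, delta_self] at hxy
    exact absurd hxy.symm (cs.simple_ne_one k)
  · rw [eq_comm, mul_eq_one_iff_eq_inv, CoxeterSystem.inv_simple] at h
    exact h

theorem mem_Res_singleton_iff {e x : C} {k : B} :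
    x ∈ X.Res {k} e ↔ X.δ e x = 1 ∨ X.δ e x = cs.simple k :=
  cs.mem_closure_simple_singleton_iff

theorem mem_Res_singleton_of_mem {z x y : C} {k : B} (hx : x ∈ X.Res {k} z)
    (hy : y ∈ X.Res {k} z) : y ∈ X.Res {k} x := by
  rw [mem_Res_singleton_iff] at hx hy ⊢
  have hxz : X.δ x z = 1 ∨ X.δ x z = cs.simple k := by
    rcases hx with hx | hx
    · rw [(X.delta_eq_one_iff z x).mp hx, delta_self]
      exact Or.inl rfl
    · exact Or.inr (X.delta_comm_of_eq_simple hx)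
  rcases hy with hy | hy
  · rwa [← (X.delta_eq_one_iff z y).mp hy]
  · rcases X.delta_mem_pair x z y k hy with h | h <;> rw [h] <;>
      rcases hxz with hxz | hxz <;> simp [hxz]

theorem delta_eq_simple_of_mem_Res {z x y : C} {k : B} (hx : x ∈ X.Res {k} z)
    (hy : y ∈ X.Res {k} z) (hxy : x ≠ y) : X.δ x y = cs.simple k :=
  ((X.mem_Res_singleton_iff.mp (X.mem_Res_singleton_of_mem hx hy)).resolve_left
    fun h => hxy ((X.delta_eq_one_iff x y).mp h))

theorem proj_eq_of_isProj {R : Set C} {x p : C} (hp : X.IsProj R x p) : X.proj R x = p := by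
  have hex : ∃ q, X.IsProj R x q := ⟨p, hp⟩
  rw [proj, dif_pos hex]
  by_contra hne
  have := hp.2 _ hex.choose_spec.1 hne
  have := hex.choose_spec.2 p hp.1 (Ne.symm hne)
  omega

theorem isProj_of_not_isRightDescent {e x p : C} {k : B} (hp : p ∈ X.Res {k} e)
    (hd : ¬cs.IsRightDescent (X.δ x p) k) : X.IsProj (X.Res {k} e) x p := by
  refine ⟨hp, fun u hu hup => ?_⟩
  have hlen := cs.not_isRightDescent_iff.mp hd
  have hxu := X.delta_eq_of_length x p u k (X.delta_eq_simple_of_mem_Res hp hu hup.symm) hlen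
  rw [dist, dist, hxu, hlen]
  omega

theorem mem_wing_iff {e x : C} {k : B} :
    x ∈ X.wing {k} e ↔ ¬cs.IsRightDescent (X.δ x e) k := by
  refine ⟨fun hx hd => ?_, fun hd => X.proj_eq_of_isProj (X.isProj_of_not_isRightDescent
    (X.mem_Res_singleton_iff.mpr (Or.inl (X.delta_self e))) hd)⟩
  obtain ⟨z, hez, hxz⟩ := X.exists_delta x e k
  have hz : z ∈ X.Res {k} e := X.mem_Res_singleton_iff.mpr (Or.inr hez)
  have hdz : ¬cs.IsRightDescent (X.δ x z) k := by
    rw [hxz, ← cs.isRightDescent_iff_not_isRightDescent_mul]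
    exact hd
  have hze : z = e := (X.proj_eq_of_isProj (X.isProj_of_not_isRightDescent hz hdz)).symm.trans hx
  rw [hze, delta_self] at hez
  exact cs.simple_ne_one k hez.symm

theorem apply_mem_wing_iff {g : Equiv.Perm C} (hg : g ∈ X.autPlus) {e x : C} {k : B} :
    g x ∈ X.wing {k} (g e) ↔ x ∈ X.wing {k} e := by
  rw [mem_wing_iff, mem_wing_iff, hg]

theorem mem_wing_of_not_mem_wing {e x : C} {k l : B}
    (hkl : orderOf (cs.simple k * cs.simple l) = 0) (hx : x ∉ X.wing {k} e) :
    x ∈ X.wing {l} e := by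
  rw [mem_wing_iff, not_not] at hx
  rw [mem_wing_iff]
  exact cs.not_isRightDescent_of_isRightDescent hkl hx

theorem wing_subset_wing {a b : C} {k l : B} (hab : X.δ a b = cs.simple k)
    (hkl : orderOf (cs.simple k * cs.simple l) = 0) : X.wing {k} b ⊆ X.wing {l} a := by
  intro x hx
  rw [mem_wing_iff] at hx
  have hxa := X.delta_eq_of_length x b a k (X.delta_comm_of_eq_simple hab)
    (cs.not_isRightDescent_iff.mp hx)
  apply X.mem_wing_of_not_mem_wing hkl
  rwa [mem_wing_iff, not_not, hxa, cs.isRightDescent_iff_not_isRightDescent_mul,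
    CoxeterSystem.simple_mul_simple_cancel_right]

theorem delta_eq_simple_mul_simple {x y z : C} {k l : B} (hxy : X.δ x y = cs.simple k)
    (hyz : X.δ y z = cs.simple l) (hkl : cs.simple k ≠ cs.simple l) :
    X.δ x z = cs.simple k * cs.simple l := by
  rw [← hxy]
  exact X.delta_eq_of_length x y z l hyz
    (by rw [hxy, cs.length_simple_mul_simple hkl, cs.length_simple])

theorem wing_subset_wing_of_delta_eq_simple_mul_simple {a b : C} {k l : B}
    (hab : X.δ a b = cs.simple k * cs.simple l) (hkl : orderOf (cs.simple k * cs.simple l) = 0) :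
    X.wing {l} b ⊆ X.wing {l} a := by
  obtain ⟨e, hbe, hae⟩ := X.exists_delta a b l
  rw [hab, CoxeterSystem.simple_mul_simple_cancel_right] at hae
  exact (X.wing_subset_wing (X.delta_comm_of_eq_simple hbe)
    ((cs.orderOf_simple_mul_simple_comm k l).trans hkl)).trans (X.wing_subset_wing hae hkl)

end RAB.Building

theorem statement16_general {B W C : Type*} [Group W] {M : CoxeterMatrix B}
    (cs : CoxeterSystem M W) (X : RAB.Building cs C)
    (i : B) (σ : Set C) (hσ : X.IsResidueOfType {i} σ)
    (c c' : C) (hc : c ∈ σ) (hc' : c' ∈ σ) (hcc' : c ≠ c')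
    (g : Equiv.Perm C) (hg : g ∈ X.autPlus) (j : B)
    (hij : orderOf (cs.simple i * cs.simple j) = 0)
    (hgc : X.δ c' (g c) = cs.simple j)
    (h : Equiv.Perm C) (hh : h ∈ X.autPlus)
    (hfix : ∀ x ∈ X.wing {i} c ∪ X.wing {i} c', h x = x) :
    ∃ x ∈ X.autPlus, h = x * g * x⁻¹ * g⁻¹ := by
  obtain ⟨z, rfl⟩ := hσ
  have hji := (cs.orderOf_simple_mul_simple_comm i j).trans hij
  have hne : cs.simple i ≠ cs.simple j := fun hs => by
    simp [hs, CoxeterSystem.simple_mul_simple_self] at hij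
  have hcgc : X.δ (g c) (g (g c)) = cs.simple i * cs.simple j := by
    rw [hg]
    exact X.delta_eq_simple_mul_simple (X.delta_eq_simple_of_mem_Res hc hc' hcc') hgc hne
  set Y := X.wing {j} (g c)
  have hgA : ∀ y ∉ X.wing {i} c, g y ∈ Y := fun y hy =>
    (X.apply_mem_wing_iff hg).mpr (X.mem_wing_of_not_mem_wing hij hy)
  have hgY : Set.MapsTo g Y Y := fun y hy =>
    X.wing_subset_wing_of_delta_eq_simple_mul_simple hcgc hij ((X.apply_mem_wing_iff hg).mpr hy)
  have hYc' : Y ⊆ X.wing {i} c' := X.wing_subset_wing hgc hji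
  have hA : Equiv.Perm.IsWandering g (X.wing {i} c ∪ X.wing {i} c')ᶜ := by
    intro n y hy hgy
    refine hgy (Or.inr (hYc' ?_))
    rw [pow_succ, Equiv.Perm.mul_apply, Equiv.Perm.coe_pow]
    exact hgY.iterate n (hgA y fun hyc => hy (Or.inl hyc))
  exact Equiv.Perm.exists_mem_preservingSubgroup_commutator_eq hg hh
    (fun y hy => hfix y (not_not.mp hy)) hA

/-- Tits' commutator trick: the element `h`, supported on the union of the
wings `X_i(d)` for `d ∈ σ \ {c, c'}`, is a commutator `[x, g]`. -/
theorem statement16 {B W C : Type*} [Fintype B] [Group W] {M : CoxeterMatrix B}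
    (cs : CoxeterSystem M W) (X : RAB.Building cs C) (hra : RAB.IsRightAngled cs)
    (i : B) (σ : Set C) (hσ : X.IsResidueOfType {i} σ)
    (c c' : C) (hc : c ∈ σ) (hc' : c' ∈ σ) (hcc' : c ≠ c')
    (g : Equiv.Perm C) (hg : g ∈ X.autPlus) (j : B)
    (hij : orderOf (cs.simple i * cs.simple j) = 0)
    (hgc : X.δ c' (g c) = cs.simple j)
    (h : Equiv.Perm C) (hh : h ∈ X.autPlus)
    (hfix : ∀ x ∈ X.wing {i} c ∪ X.wing {i} c', h x = x)
    (hprod : ∀ d ∈ σ \ {c, c'}, ∃ hd ∈ X.V i d, ∀ x ∈ X.wing {i} d, hd x = h x) :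
    ∃ x ∈ X.autPlus, h = x * g * x⁻¹ * g⁻¹ :=
  statement16_general cs X i σ hσ c c' hc hc' hcc' g hg j hij hgc h hh hfix
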